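/- arXiv:1804.02097 — 3 statements merged into one kernel-verified Lean document; each statement's English description precedes it below -/
import Mathlib

section
/- Suppose Ω ∈ 𝓕_α, i.e., Ω ∈ [−L,L]^{K×K} is symmetric and for all h > 0, max_{1≤k≤K} Σ_{l : d(c_k, c_l) > h} |Ω_{kl}| ≤ L (h/d₀)^{−α}. Suppose condition (C1) holds: every node v_i in cluster k satisfies d(v_i, v_{c_k}) ≤ δ, and d is symmetric and satisfies the triangle inequality. Then 𝒲 = Z* Ω Z*ᵀ satisfies, for every node i and every h > 2δ: Σ_{j : d(v_i, v_j) > h} |𝒲_{ij}| ≤ L n_max ((h − 2δ)/d₀)^{−α}, where n_max is the largest cluster size. -/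
open Matrix Finset

/-- Lemma 1: If `Ω ∈ 𝓕_α` (tail sums indexed by centroid distances decay
like `L (h/d₀)^{−α}`) and condition (C1) holds (each node within distance `δ` of its
cluster centroid), then `𝒲 = Z* Ω Z*ᵀ` has tail sums (indexed by node distances) bounded
by `L n_max ((h−2δ)/d₀)^{−α}` for all `h > 2δ`. -/
theorem banded_class_transfer (n K : ℕ)
    (g : Fin n → Fin K) (c : Fin K → Fin n)
    (d : Fin n → Fin n → ℝ)
    (hd_nonneg : ∀ i j, 0 ≤ d i j)
    (hd_symm : ∀ i j, d i j = d j i)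
    (hd_tri : ∀ i j l, d i j ≤ d i l + d l j)
    (L d₀ δ α : ℝ) (hL : 0 < L) (hd₀ : 0 < d₀) (hδ : 0 < δ) (hα : 0 ≤ α)
    (hc : ∀ k, g (c k) = k)
    (hC1 : ∀ i, d i (c (g i)) ≤ δ)
    (Ω : Matrix (Fin K) (Fin K) ℝ)
    (hΩsymm : Ω.IsSymm)
    (hΩbdd : ∀ k l, |Ω k l| ≤ L)
    (hdecay : ∀ h : ℝ, 0 < h → ∀ k,
      ∑ l ∈ Finset.univ.filter (fun l => h < d (c k) (c l)), |Ω k l|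
        ≤ L * (h / d₀) ^ (-α)) :
    let nmax : ℕ := Finset.univ.sup (fun k => (Finset.univ.filter (fun i => g i = k)).card)
    let W : Matrix (Fin n) (Fin n) ℝ := fun i j => Ω (g i) (g j)
    ∀ i : Fin n, ∀ h : ℝ, 2 * δ < h →
      ∑ j ∈ Finset.univ.filter (fun j => h < d i j), |W i j|
        ≤ L * (nmax : ℝ) * ((h - 2 * δ) / d₀) ^ (-α) := by
  intro nmax W i h hh
  set S : Finset (Fin n) := Finset.univ.filter (fun j => h < d i j) with hS
  set T : Finset (Fin K) :=
    Finset.univ.filter (fun l => h - 2 * δ < d (c (g i)) (c l)) with hT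
  -- key: for j with h < d i j, centroid distance exceeds h - 2δ
  have key : ∀ j, h < d i j → h - 2 * δ < d (c (g i)) (c (g j)) := by
    intro j hj
    have h1 : d i j ≤ d i (c (g i)) + d (c (g i)) j := hd_tri _ _ _
    have h2 : d (c (g i)) j ≤ d (c (g i)) (c (g j)) + d (c (g j)) j := hd_tri _ _ _
    have h3 : d i (c (g i)) ≤ δ := hC1 i
    have h4 : d (c (g j)) j ≤ δ := by rw [hd_symm]; exact hC1 j
    linarith
  have fiber : ∑ j ∈ S, |W i j| =
      ∑ l ∈ Finset.univ, ∑ j ∈ S.filter (fun j => g j = l), |Ω (g i) (g j)| := by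
    rw [Finset.sum_fiberwise]
  rw [fiber]
  have step1 : ∀ l ∈ Finset.univ, ∑ j ∈ S.filter (fun j => g j = l), |Ω (g i) (g j)|
      ≤ if l ∈ T then (nmax : ℝ) * |Ω (g i) l| else 0 := by
    intro l _
    by_cases hl : l ∈ T
    · simp only [hl, if_true]
      have : ∑ j ∈ S.filter (fun j => g j = l), |Ω (g i) (g j)|
          = (S.filter (fun j => g j = l)).card * |Ω (g i) l| := by
        rw [Finset.sum_congr rfl (fun j hj => ?_), Finset.sum_const, nsmul_eq_mul]
        rw [(Finset.mem_filter.mp hj).2]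
      rw [this]
      apply mul_le_mul_of_nonneg_right _ (abs_nonneg _)
      have hsub : S.filter (fun j => g j = l) ⊆ Finset.univ.filter (fun j => g j = l) := by
        intro j hj
        simp only [Finset.mem_filter] at hj ⊢
        exact ⟨Finset.mem_univ _, hj.2⟩
      have hcard : (S.filter (fun j => g j = l)).card ≤ nmax :=
        le_trans (Finset.card_le_card hsub)
          (Finset.le_sup (f := fun k => (Finset.univ.filter (fun i => g i = k)).card)
            (Finset.mem_univ l))
      exact_mod_cast hcard
    · simp only [hl, if_false]
      have : S.filter (fun j => g j = l) = ∅ := by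
        rw [Finset.filter_eq_empty_iff]
        intro j hj hgj
        apply hl
        simp only [hT, Finset.mem_filter, Finset.mem_univ, true_and]
        rw [← hgj]
        exact key j (by simpa [hS] using hj)
      simp [this]
  calc ∑ l ∈ Finset.univ, ∑ j ∈ S.filter (fun j => g j = l), |Ω (g i) (g j)|
      ≤ ∑ l ∈ Finset.univ, (if l ∈ T then (nmax : ℝ) * |Ω (g i) l| else 0) :=
        Finset.sum_le_sum step1
    _ = ∑ l ∈ T, (nmax : ℝ) * |Ω (g i) l| := by rw [Finset.sum_ite_mem, Finset.univ_inter]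
    _ = (nmax : ℝ) * ∑ l ∈ T, |Ω (g i) l| := by rw [Finset.mul_sum]
    _ ≤ (nmax : ℝ) * (L * ((h - 2 * δ) / d₀) ^ (-α)) := by
        apply mul_le_mul_of_nonneg_left _ (Nat.cast_nonneg _)
        exact hdecay (h - 2 * δ) (by linarith) (g i)
    _ = L * (nmax : ℝ) * ((h - 2 * δ) / d₀) ^ (-α) := by ring
end

section
/- Combining the previous statements: if Û ∈ ℝ^{n×K} has orthonormal columns, Z* is a membership matrix with assignment g and max cluster size n_max, U* = Z* Δ⁻¹, (Ẑ, Â) is a global minimizer of ‖Û − Z A‖²_F over Z ∈ 𝓩_{n,K}, A ∈ ℝ^{K×K}, Q is any K×K orthogonal matrix, and M = { i : ‖Â_{g_i·} − U*_{i·} Q‖₂ ≥ √(1/(2 n_max)) } with Â_{g_i·} interpreted as the i-th row of Ẑ Â, then |M| ≤ 8 n_max ‖Û − U* Q‖²_F. -/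
open Matrix Finset

/-- The set of n×K membership matrices: binary entries with each row summing to 1. -/
def IsMembership {n K : ℕ} (Z : Matrix (Fin n) (Fin K) ℝ) : Prop :=
  (∀ i k, Z i k = 0 ∨ Z i k = 1) ∧ ∀ i, ∑ k, Z i k = 1

/-- Squared Frobenius norm of a real matrix. -/
noncomputable def fnormSq {n K : ℕ} (A : Matrix (Fin n) (Fin K) ℝ) : ℝ :=
  ∑ i, ∑ k, (A i k) ^ 2

/-- combining k-means optimality with the mis-clustering definition:
`|M| ≤ 8 n_max ‖Û − U* Q‖²_F`. -/
theorem misclustered_count_via_eigenvector_error (n K : ℕ)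
    (Uh : Matrix (Fin n) (Fin K) ℝ) (hUh : Uhᵀ * Uh = 1)
    (g : Fin n → Fin K)
    (hpos : ∀ k, 0 < (Finset.univ.filter (fun i => g i = k)).card)
    (Zh : Matrix (Fin n) (Fin K) ℝ) (Ah : Matrix (Fin K) (Fin K) ℝ)
    (hZh : IsMembership Zh)
    (hmin : ∀ Z : Matrix (Fin n) (Fin K) ℝ, IsMembership Z →
      ∀ A : Matrix (Fin K) (Fin K) ℝ,
        fnormSq (Uh - Zh * Ah) ≤ fnormSq (Uh - Z * A))
    (Q : Matrix (Fin K) (Fin K) ℝ) (hQ : Qᵀ * Q = 1) :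
    let nk : Fin K → ℕ := fun k => (Finset.univ.filter (fun i => g i = k)).card
    let nmax : ℕ := Finset.univ.sup nk
    let Zs : Matrix (Fin n) (Fin K) ℝ := fun i k => if g i = k then 1 else 0
    let Δ := Matrix.diagonal (fun k => Real.sqrt (nk k))
    let Us := Zs * Δ⁻¹
    let M : Finset (Fin n) :=
      Finset.univ.filter (fun i =>
        Real.sqrt (1 / (2 * (nmax : ℝ)))
          ≤ Real.sqrt (∑ k, ((Zh * Ah - Us * Q) i k) ^ 2))
    (M.card : ℝ) ≤ 8 * (nmax : ℝ) * fnormSq (Uh - Us * Q) := by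
  intro nk nmax Zs Δ Us M
  have hC : 0 ≤ fnormSq (Uh - Us * Q) := by
    apply Finset.sum_nonneg; intro i _; apply Finset.sum_nonneg; intro k _; positivity
  by_cases hK : K = 0
  · have hn : n = 0 := by
      by_contra hn
      subst hK; exact (g ⟨0, Nat.pos_of_ne_zero hn⟩).elim0
    have : M = ∅ := by subst hn; exact Finset.eq_empty_of_isEmpty M
    rw [this]; simp; positivity
  -- K > 0, so nmax > 0
  have hnmax : 0 < nmax := by
    have := hpos ⟨0, Nat.pos_of_ne_zero hK⟩
    exact lt_of_lt_of_le this (Finset.le_sup (f := nk) (Finset.mem_univ _))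
  have hnmaxR : (0:ℝ) < (nmax : ℝ) := by exact_mod_cast hnmax
  -- Zs is a membership matrix
  have hZsmem : IsMembership Zs := by
    constructor
    · intro i k; by_cases h : g i = k <;> simp [Zs, h]
    · intro i; simp [Zs]
  -- k-means optimality
  have hkey : fnormSq (Uh - Zh * Ah) ≤ fnormSq (Uh - Us * Q) := by
    have := hmin Zs hZsmem (Δ⁻¹ * Q)
    rwa [← Matrix.mul_assoc] at this
  -- triangle-type inequality
  have htri : fnormSq (Zh * Ah - Us * Q)
      ≤ 2 * fnormSq (Uh - Zh * Ah) + 2 * fnormSq (Uh - Us * Q) := by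
    unfold fnormSq
    rw [Finset.mul_sum, Finset.mul_sum, ← Finset.sum_add_distrib]
    apply Finset.sum_le_sum; intro i _
    rw [Finset.mul_sum, Finset.mul_sum, ← Finset.sum_add_distrib]
    apply Finset.sum_le_sum; intro k _
    have ha : (Zh * Ah - Us * Q) i k
        = (Uh - Us * Q) i k - (Uh - Zh * Ah) i k := by
      simp [Matrix.sub_apply]
    rw [ha]; nlinarith [sq_nonneg ((Uh - Us * Q) i k + (Uh - Zh * Ah) i k)]
  have hD4 : fnormSq (Zh * Ah - Us * Q) ≤ 4 * fnormSq (Uh - Us * Q) := by linarith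
  -- counting
  have hcount : (M.card : ℝ) * (1 / (2 * (nmax : ℝ))) ≤ fnormSq (Zh * Ah - Us * Q) := by
    have h1 : (M.card : ℝ) * (1 / (2 * (nmax : ℝ)))
        = ∑ i ∈ M, (1 / (2 * (nmax : ℝ))) := by
      rw [Finset.sum_const, nsmul_eq_mul]
    rw [h1]
    have h2 : ∀ i ∈ M, (1 / (2 * (nmax : ℝ))) ≤ ∑ k, ((Zh * Ah - Us * Q) i k) ^ 2 := by
      intro i hi
      have hi' := (Finset.mem_filter.mp hi).2
      have hx : (0:ℝ) ≤ 1 / (2 * (nmax : ℝ)) := by positivity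
      have hS : (0:ℝ) ≤ ∑ k, ((Zh * Ah - Us * Q) i k) ^ 2 := by
        apply Finset.sum_nonneg; intro k _; positivity
      have h3 := pow_le_pow_left₀ (Real.sqrt_nonneg _) hi' 2
      rwa [Real.sq_sqrt hx, Real.sq_sqrt hS] at h3
    calc ∑ i ∈ M, (1 / (2 * (nmax : ℝ)))
        ≤ ∑ i ∈ M, ∑ k, ((Zh * Ah - Us * Q) i k) ^ 2 := Finset.sum_le_sum h2
      _ ≤ ∑ i, ∑ k, ((Zh * Ah - Us * Q) i k) ^ 2 := by
          apply Finset.sum_le_sum_of_subset_of_nonneg (Finset.subset_univ M)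
          intro i _ _; apply Finset.sum_nonneg; intro k _; positivity
      _ = fnormSq (Zh * Ah - Us * Q) := rfl
  have h6 : (M.card : ℝ) * (1 / (2 * (nmax:ℝ))) * (2 * (nmax:ℝ))
      ≤ 4 * fnormSq (Uh - Us * Q) * (2 * (nmax:ℝ)) :=
    mul_le_mul_of_nonneg_right (hcount.trans hD4) (by positivity)
  have h7 : (M.card : ℝ) * (1 / (2 * (nmax:ℝ))) * (2 * (nmax:ℝ)) = (M.card : ℝ) := by
    field_simp
  rw [h7] at h6
  linarith
end

section
/- Let A, Â be n×n real symmetric matrices, where A has rank exactly K with smallest nonzero eigenvalue magnitude γ_K > 0, let U ∈ ℝ^{n×K} consist of orthonormal eigenvectors of A spanning its column space, and let Û ∈ ℝ^{n×K} consist of orthonormal eigenvectors of Â corresponding to its K largest-magnitude eigenvalues. If ‖Â − A‖ ≤ γ_K/2, then ‖Û Ûᵀ − U Uᵀ‖ ≤ 2 ‖Â − A‖ / γ_K. -/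
open Matrix
open scoped Matrix.Norms.L2Operator

/-!
Put `ε = ‖Â - A‖`, `P = U Uᵀ` and `P̂ = Û Ûᵀ`. Because `A` has rank `K`, two dimension counts
(Weyl's inequalities) locate the spectrum of `Â`: some unit vector in the span of `Û` and any
column of `V` is killed by `A`, whence `|E j| ≤ ε`, and some unit vector in the span of `U` lies
in the span of `V` and any column of `Û`, whence `|D̂ k| ≥ γ_K - ε`. The Sylvester-type identities
`diag(D̂) Ûᵀ (1 - P) = Ûᵀ (Â - A) (1 - P)` and
`(1 - P̂) U diag(D) = V diag(E) Vᵀ (1 - P̂) U - (1 - P̂) (Â - A) U` then give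
`(γ_K - ε) ‖Ûᵀ (1 - P)‖ ≤ ε` and `(γ_K - ε) ‖(1 - P̂) U‖ ≤ ε`, and `γ_K - ε ≥ γ_K / 2`.
Finally `P̂ - P = P̂ (1 - P) - (1 - P̂) P`, where the two terms have orthogonal ranges and live on
the complementary subspaces `ker P` and `range P`, so `‖P̂ - P‖` is at most the larger of their
norms.
-/

namespace ContinuousLinearMap

open scoped RealInnerProductSpace

variable {E : Type*} [NormedAddCommGroup E] [InnerProductSpace ℝ E] [CompleteSpace E]

lemma inner_apply_one_sub_apply_eq_zero {p : E →L[ℝ] E} (hp : IsStarProjection p) (u v : E) :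
    ⟪p u, (1 - p) v⟫ = 0 := by
  have h := hp.isSelfAdjoint.isSymmetric u ((1 - p) v)
  simp only [coe_coe] at h
  rw [h, ← mul_apply_eq_comp, hp.mul_one_sub_self, _root_.zero_apply, inner_zero_right]

lemma norm_sub_le_of_isStarProjection {p q : E →L[ℝ] E} (hp : IsStarProjection p)
    (hq : IsStarProjection q) {r : ℝ} (hpq : ‖p * (1 - q)‖ ≤ r) (hqp : ‖(1 - p) * q‖ ≤ r) :
    ‖p - q‖ ≤ r := by
  refine opNorm_le_bound _ ((norm_nonneg _).trans hpq) fun x => ?_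
  have hsplit : (p - q) x = p ((1 - q) x) - (1 - p) (q x) := by
    simp only [_root_.sub_apply, one_apply_eq_self, map_sub]
    abel
  have h1 : ‖p ((1 - q) x)‖ ≤ r * ‖(1 - q) x‖ :=
    calc ‖p ((1 - q) x)‖ = ‖(p * (1 - q)) ((1 - q) x)‖ := by
          rw [mul_apply_eq_comp, ← mul_apply_eq_comp (1 - q), hq.one_sub.isIdempotentElem.eq]
      _ ≤ r * ‖(1 - q) x‖ := le_of_opNorm_le _ hpq _
  have h2 : ‖(1 - p) (q x)‖ ≤ r * ‖q x‖ :=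
    calc ‖(1 - p) (q x)‖ = ‖((1 - p) * q) (q x)‖ := by
          rw [mul_apply_eq_comp, ← mul_apply_eq_comp q, hq.isIdempotentElem.eq]
      _ ≤ r * ‖q x‖ := le_of_opNorm_le _ hqp _
  have hx : ‖x‖ * ‖x‖ = ‖(1 - q) x‖ * ‖(1 - q) x‖ + ‖q x‖ * ‖q x‖ := by
    rw [← norm_add_sq_eq_norm_sq_add_norm_sq_real, _root_.sub_apply, one_apply_eq_self,
      sub_add_cancel]
    rw [real_inner_comm]
    exact inner_apply_one_sub_apply_eq_zero hq _ _
  have hr : 0 ≤ r := (norm_nonneg _).trans hpq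
  rw [mul_self_le_mul_self_iff (norm_nonneg _) (by positivity), hsplit,
    norm_sub_sq_eq_norm_sq_add_norm_sq_real (inner_apply_one_sub_apply_eq_zero hp _ _)]
  calc _ ≤ (r * ‖(1 - q) x‖) * (r * ‖(1 - q) x‖) + (r * ‖q x‖) * (r * ‖q x‖) := by gcongr
    _ = r * ‖x‖ * (r * ‖x‖) := by linear_combination (r * r) * hx.symm

end ContinuousLinearMap

namespace Matrix

lemma isStarProjection_mul_transpose {m n : Type*} [Fintype m] [Fintype n] [DecidableEq m]
    [DecidableEq n] {W : Matrix m n ℝ} (hW : Wᵀ * W = 1) : IsStarProjection (W * Wᵀ) where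
  isIdempotentElem := by
    rw [IsIdempotentElem, Matrix.mul_assoc, ← Matrix.mul_assoc Wᵀ, hW, Matrix.one_mul]
  isSelfAdjoint := by
    rw [IsSelfAdjoint, star_eq_conjTranspose, conjTranspose_eq_transpose_of_trivial,
      transpose_mul, transpose_transpose]

section L2OpNorm

variable {m n l : Type*} [Fintype m] [Fintype n] [Fintype l] [DecidableEq n] [DecidableEq l]

lemma l2_opNorm_transpose [DecidableEq m] (M : Matrix m n ℝ) : ‖Mᵀ‖ = ‖M‖ := by
  rw [← conjTranspose_eq_transpose_of_trivial, l2_opNorm_conjTranspose]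

lemma l2_opNorm_le_one_of_transpose_mul_self_eq_one {W : Matrix m n ℝ} (hW : Wᵀ * W = 1) :
    ‖W‖ ≤ 1 := by
  have h : ‖W‖ * ‖W‖ ≤ 1 := by
    rw [← l2_opNorm_conjTranspose_mul_self, conjTranspose_eq_transpose_of_trivial, hW]
    exact IsStarProjection.norm_le _ (IsStarProjection.one _)
  nlinarith [norm_nonneg W]

lemma l2_opNorm_transpose_le_one_of_transpose_mul_self_eq_one [DecidableEq m]
    {W : Matrix m n ℝ} (hW : Wᵀ * W = 1) : ‖Wᵀ‖ ≤ 1 :=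
  (l2_opNorm_transpose W).trans_le (l2_opNorm_le_one_of_transpose_mul_self_eq_one hW)

lemma l2_opNorm_mul_of_transpose_mul_self_eq_one [DecidableEq m] {W : Matrix m n ℝ}
    (hW : Wᵀ * W = 1) (M : Matrix n l ℝ) : ‖W * M‖ = ‖M‖ := by
  refine le_antisymm ?_ ?_
  · calc ‖W * M‖ ≤ ‖W‖ * ‖M‖ := l2_opNorm_mul W M
      _ ≤ ‖M‖ := mul_le_of_le_one_left (norm_nonneg M)
        (l2_opNorm_le_one_of_transpose_mul_self_eq_one hW)
  · calc ‖M‖ = ‖Wᵀ * (W * M)‖ := by rw [← Matrix.mul_assoc, hW, Matrix.one_mul]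
      _ ≤ ‖Wᵀ‖ * ‖W * M‖ := l2_opNorm_mul _ _
      _ ≤ ‖W * M‖ := mul_le_of_le_one_left (norm_nonneg _)
        (l2_opNorm_transpose_le_one_of_transpose_mul_self_eq_one hW)

lemma l2_opNorm_one_sub_mul_transpose_le_one [DecidableEq m] {W : Matrix m n ℝ}
    (hW : Wᵀ * W = 1) : ‖1 - W * Wᵀ‖ ≤ 1 :=
  IsStarProjection.norm_le _ (isStarProjection_mul_transpose hW).one_sub

lemma l2_opNorm_diagonal_le {d : n → ℝ} {a : ℝ} (ha : 0 ≤ a) (hd : ∀ i, |d i| ≤ a) :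
    ‖diagonal d‖ ≤ a := by
  rw [l2_opNorm_diagonal]
  exact (pi_norm_le_iff_of_nonneg ha).mpr hd

lemma l2_opNorm_diagonal_mul_le {d : n → ℝ} {a : ℝ} (ha : 0 ≤ a) (hd : ∀ i, |d i| ≤ a)
    (M : Matrix n l ℝ) : ‖diagonal d * M‖ ≤ a * ‖M‖ :=
  (l2_opNorm_mul _ _).trans (by grw [l2_opNorm_diagonal_le ha hd])

lemma mul_l2_opNorm_le_diagonal_mul {d : n → ℝ} {b : ℝ} (hd : ∀ i, b ≤ |d i|)
    (M : Matrix n l ℝ) : b * ‖M‖ ≤ ‖diagonal d * M‖ := by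
  rcases le_or_gt b 0 with hb | hb
  · exact (mul_nonpos_of_nonpos_of_nonneg hb (norm_nonneg M)).trans (norm_nonneg _)
  have hinv : ‖diagonal d⁻¹‖ ≤ b⁻¹ := l2_opNorm_diagonal_le (by positivity) fun i => by
    rw [Pi.inv_apply, abs_inv]
    exact inv_anti₀ hb (hd i)
  have hM : M = diagonal d⁻¹ * (diagonal d * M) := by
    rw [← Matrix.mul_assoc, diagonal_mul_diagonal]
    simp [fun i => abs_pos.mp (hb.trans_le (hd i))]
  refine (le_inv_mul_iff₀ hb).mp ?_
  calc ‖M‖ = ‖diagonal d⁻¹ * (diagonal d * M)‖ := congrArg _ hM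
    _ ≤ ‖diagonal d⁻¹‖ * ‖diagonal d * M‖ := l2_opNorm_mul _ _
    _ ≤ b⁻¹ * ‖diagonal d * M‖ := by gcongr

lemma mul_l2_opNorm_le_mul_diagonal [DecidableEq m] {d : n → ℝ} {b : ℝ} (hd : ∀ i, b ≤ |d i|)
    (M : Matrix m n ℝ) : b * ‖M‖ ≤ ‖M * diagonal d‖ := by
  rw [← l2_opNorm_transpose (M * diagonal d), transpose_mul, diagonal_transpose,
    ← l2_opNorm_transpose M]
  exact mul_l2_opNorm_le_diagonal_mul hd Mᵀ

lemma l2_opNorm_mul_diagonal_mul_transpose_le [DecidableEq m] {W : Matrix m n ℝ}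
    (hW : Wᵀ * W = 1) {d : n → ℝ} {a : ℝ} (ha : 0 ≤ a) (hd : ∀ i, |d i| ≤ a) :
    ‖W * diagonal d * Wᵀ‖ ≤ a :=
  calc ‖W * diagonal d * Wᵀ‖ ≤ ‖W‖ * ‖diagonal d‖ * ‖Wᵀ‖ := by grw [l2_opNorm_mul, l2_opNorm_mul]
    _ ≤ a := by
      grw [l2_opNorm_le_one_of_transpose_mul_self_eq_one hW,
        l2_opNorm_transpose_le_one_of_transpose_mul_self_eq_one hW, l2_opNorm_diagonal_le ha hd]
      simp

end L2OpNorm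

-- Vectors are encoded as one-column matrices, so that only the operator norm is ever needed.
lemma exists_ne_zero_mul_eq_zero_of_card_lt {K m ι : Type*} [Field K] [Fintype m] [Fintype ι]
    [DecidableEq ι] (M : Matrix m ι K) (h : Fintype.card m < Fintype.card ι) :
    ∃ C : Matrix ι (Fin 1) K, C ≠ 0 ∧ M * C = 0 := by
  obtain ⟨v, hv, hv0⟩ := Submodule.exists_mem_ne_zero_of_ne_bot
    (LinearMap.ker_ne_bot_of_finrank_lt (f := M.mulVecLin) (by simpa using h))
  refine ⟨replicateCol (Fin 1) v, by simpa using hv0, ?_⟩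
  rw [← replicateCol_mulVec]
  simp_all

lemma transpose_one_submatrix_mul_one_submatrix {R ι τ : Type*} [Semiring R] [Fintype ι]
    [DecidableEq ι] [DecidableEq τ] {e : τ → ι} (he : Function.Injective e) :
    ((1 : Matrix ι ι R).submatrix id e)ᵀ * (1 : Matrix ι ι R).submatrix id e = 1 := by
  ext s t
  simp [mul_apply, one_apply, he.eq_iff]

lemma diagonal_mul_one_submatrix {R ι τ : Type*} [Semiring R] [Fintype ι] [DecidableEq ι]
    [Fintype τ] [DecidableEq τ] (d : ι → R) (e : τ → ι) :
    diagonal d * (1 : Matrix ι ι R).submatrix id e =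
      (1 : Matrix ι ι R).submatrix id e * diagonal (d ∘ e) := by
  ext i t
  by_cases h : i = e t <;> simp [one_apply, h]

lemma transpose_mul_mul_self_eq_one {R m n l : Type*} [CommSemiring R] [Fintype m] [Fintype n]
    [DecidableEq n] [DecidableEq l] {S : Matrix m n R} {J : Matrix n l R} (hS : Sᵀ * S = 1)
    (hJ : Jᵀ * J = 1) : (S * J)ᵀ * (S * J) = 1 := by
  rw [transpose_mul, Matrix.mul_assoc, ← Matrix.mul_assoc Sᵀ, hS, Matrix.one_mul, hJ]

-- `S * (1 : Matrix ι ι R).submatrix id e` is the matrix of the columns `S_{e t}` of `S`.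
lemma mul_diagonal_mul_transpose_mul_one_submatrix {R n ι τ : Type*} [CommSemiring R]
    [Fintype n] [Fintype ι] [Fintype τ] [DecidableEq ι] [DecidableEq τ] {S : Matrix n ι R}
    (hS : Sᵀ * S = 1) (d : ι → R) (e : τ → ι) :
    S * diagonal d * Sᵀ * (S * (1 : Matrix ι ι R).submatrix id e) =
      S * (1 : Matrix ι ι R).submatrix id e * diagonal (d ∘ e) := by
  rw [Matrix.mul_assoc, ← Matrix.mul_assoc Sᵀ, hS, Matrix.one_mul, Matrix.mul_assoc,
    diagonal_mul_one_submatrix, Matrix.mul_assoc]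

section Weyl

variable {n ι τ κ : Type*} [Fintype n] [Fintype ι] [Fintype τ] [Fintype κ]
  [DecidableEq n] [DecidableEq ι] [DecidableEq τ]
  {S : Matrix n ι ℝ} {d : ι → ℝ} {e : τ → ι}

theorem le_l2_opNorm_sub_mul_of_card_lt (hS : Sᵀ * S = 1) (he : Function.Injective e) {b : ℝ}
    (hb : ∀ t, b ≤ |d (e t)|) (M : Matrix n κ ℝ) (R : Matrix κ n ℝ)
    (hcard : Fintype.card κ < Fintype.card τ) : b ≤ ‖S * diagonal d * Sᵀ - M * R‖ := by
  have hST := mul_diagonal_mul_transpose_mul_one_submatrix hS d e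
  set T := S * (1 : Matrix ι ι ℝ).submatrix id e
  have hT : Tᵀ * T = 1 :=
    transpose_mul_mul_self_eq_one hS (transpose_one_submatrix_mul_one_submatrix he)
  obtain ⟨C, hC0, hC⟩ := exists_ne_zero_mul_eq_zero_of_card_lt (R * T) hcard
  have hkey : (S * diagonal d * Sᵀ - M * R) * (T * C) = T * (diagonal (d ∘ e) * C) := by
    rw [Matrix.sub_mul, ← Matrix.mul_assoc _ T, hST, Matrix.mul_assoc M, ← Matrix.mul_assoc R, hC,
      Matrix.mul_zero, sub_zero, Matrix.mul_assoc]
  refine le_of_mul_le_mul_right ?_ (norm_pos_iff.mpr hC0)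
  calc b * ‖C‖ ≤ ‖diagonal (d ∘ e) * C‖ := mul_l2_opNorm_le_diagonal_mul hb C
    _ = ‖(S * diagonal d * Sᵀ - M * R) * (T * C)‖ := by
      rw [hkey, l2_opNorm_mul_of_transpose_mul_self_eq_one hT]
    _ ≤ ‖S * diagonal d * Sᵀ - M * R‖ * ‖C‖ := by
      grw [l2_opNorm_mul, l2_opNorm_mul_of_transpose_mul_self_eq_one hT]

theorem le_add_l2_opNorm_sub_of_card_lt [DecidableEq κ] (hS : Sᵀ * S = 1)
    (he : Function.Injective e) {a : ℝ} (ha : 0 ≤ a) (hd : ∀ t, |d (e t)| ≤ a)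
    {U : Matrix n κ ℝ} (hU : Uᵀ * U = 1) {D : κ → ℝ} {γ : ℝ} (hD : ∀ k, γ ≤ |D k|)
    (hcard : Fintype.card n < Fintype.card κ + Fintype.card τ) :
    γ ≤ a + ‖S * diagonal d * Sᵀ - U * diagonal D * Uᵀ‖ := by
  have hST := mul_diagonal_mul_transpose_mul_one_submatrix hS d e
  set T := S * (1 : Matrix ι ι ℝ).submatrix id e
  have hT : Tᵀ * T = 1 :=
    transpose_mul_mul_self_eq_one hS (transpose_one_submatrix_mul_one_submatrix he)
  obtain ⟨W, hW0, hW⟩ :=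
    exists_ne_zero_mul_eq_zero_of_card_lt (fromCols U T) (by simpa using hcard)
  obtain ⟨C, C', rfl⟩ : ∃ C C', W = fromRows C C' := ⟨_, _, (fromRows_toRows W).symm⟩
  rw [fromCols_mul_fromRows, add_eq_zero_iff_eq_neg] at hW
  have hCC' : ‖C'‖ = ‖C‖ := by
    rw [← l2_opNorm_mul_of_transpose_mul_self_eq_one hU, hW, norm_neg,
      l2_opNorm_mul_of_transpose_mul_self_eq_one hT]
  have hC0 : 0 < ‖C‖ := by
    refine (norm_nonneg C).lt_of_ne' fun h => hW0 ?_
    rw [norm_eq_zero.mp h, norm_eq_zero.mp (hCC'.trans h), fromRows_zero]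
  have hA : U * diagonal D * Uᵀ * (U * C) = U * (diagonal D * C) := by
    rw [Matrix.mul_assoc, ← Matrix.mul_assoc Uᵀ, hU, Matrix.one_mul, Matrix.mul_assoc]
  have hB : S * diagonal d * Sᵀ * (U * C) = -(T * (diagonal (d ∘ e) * C')) := by
    rw [hW, Matrix.mul_neg, ← Matrix.mul_assoc, hST, Matrix.mul_assoc]
  set B := S * diagonal d * Sᵀ
  refine le_of_mul_le_mul_right ?_ hC0
  calc γ * ‖C‖ ≤ ‖diagonal D * C‖ := mul_l2_opNorm_le_diagonal_mul hD C
    _ = ‖B * (U * C) - (B - U * diagonal D * Uᵀ) * (U * C)‖ := by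
      rw [Matrix.sub_mul, sub_sub_cancel, hA, l2_opNorm_mul_of_transpose_mul_self_eq_one hU]
    _ ≤ ‖B * (U * C)‖ + ‖(B - U * diagonal D * Uᵀ) * (U * C)‖ := norm_sub_le _ _
    _ ≤ a * ‖C‖ + ‖B - U * diagonal D * Uᵀ‖ * ‖C‖ := by
      gcongr ?_ + ?_
      · rw [hB, norm_neg, l2_opNorm_mul_of_transpose_mul_self_eq_one hT, ← hCC']
        exact l2_opNorm_diagonal_mul_le (d := d ∘ e) ha hd C'
      · rw [← l2_opNorm_mul_of_transpose_mul_self_eq_one hU C]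
        exact l2_opNorm_mul _ _
    _ = (a + ‖B - U * diagonal D * Uᵀ‖) * ‖C‖ := by ring

end Weyl

section SpectralDecomposition

variable {n κ ν : Type*} {W : Matrix n κ ℝ} {V : Matrix n ν ℝ}

lemma transpose_fromCols_mul_self [Fintype n] [DecidableEq κ] [DecidableEq ν]
    (hW : Wᵀ * W = 1) (hV : Vᵀ * V = 1) (hWV : Wᵀ * V = 0) :
    (fromCols W V)ᵀ * fromCols W V = 1 := by
  have hVW : Vᵀ * W = 0 := by rw [← transpose_transpose W, ← transpose_mul, hWV, transpose_zero]
  rw [transpose_fromCols, fromRows_mul_fromCols, hW, hV, hWV, hVW, fromBlocks_one]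

lemma fromCols_mul_diagonal_mul_transpose [Fintype κ] [Fintype ν] [DecidableEq κ]
    [DecidableEq ν] (d : κ → ℝ) (f : ν → ℝ) :
    fromCols W V * diagonal (Sum.elim d f) * (fromCols W V)ᵀ =
      W * diagonal d * Wᵀ + V * diagonal f * Vᵀ := by
  rw [← fromBlocks_diagonal, fromCols_mul_fromBlocks, transpose_fromCols, fromCols_mul_fromRows]
  simp

lemma transpose_mul_add_mul_diagonal_mul_transpose [Fintype n] [Fintype κ] [Fintype ν]
    [DecidableEq κ] [DecidableEq ν] (hW : Wᵀ * W = 1) (hWV : Wᵀ * V = 0)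
    (d : κ → ℝ) (f : ν → ℝ) :
    Wᵀ * (W * diagonal d * Wᵀ + V * diagonal f * Vᵀ) = diagonal d * Wᵀ := by
  simp only [Matrix.mul_add, ← Matrix.mul_assoc, hW, hWV, Matrix.one_mul, Matrix.zero_mul,
    add_zero]

lemma one_sub_mul_transpose_mul_add_mul_diagonal_mul_transpose [Fintype n] [DecidableEq n]
    [Fintype κ] [Fintype ν] [DecidableEq κ] [DecidableEq ν] (hW : Wᵀ * W = 1)
    (hWV : Wᵀ * V = 0) (d : κ → ℝ) (f : ν → ℝ) :
    (1 - W * Wᵀ) * (W * diagonal d * Wᵀ + V * diagonal f * Vᵀ) =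
      V * diagonal f * Vᵀ * (1 - W * Wᵀ) := by
  have hVW : Vᵀ * W = 0 := by rw [← transpose_transpose W, ← transpose_mul, hWV, transpose_zero]
  have hWW : V * diagonal f * Vᵀ * (W * Wᵀ) = 0 := by
    rw [← Matrix.mul_assoc, Matrix.mul_assoc _ Vᵀ, hVW, Matrix.mul_zero, Matrix.zero_mul]
  rw [Matrix.sub_mul, Matrix.one_mul, Matrix.mul_assoc W Wᵀ,
    transpose_mul_add_mul_diagonal_mul_transpose hW hWV, ← Matrix.mul_assoc, add_sub_cancel_left,
    Matrix.mul_sub, Matrix.mul_one, hWW, sub_zero]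

lemma mul_diagonal_mul_transpose_mul_self [Fintype n] [Fintype κ] [DecidableEq κ]
    (hW : Wᵀ * W = 1) (d : κ → ℝ) : W * diagonal d * Wᵀ * W = W * diagonal d := by
  rw [Matrix.mul_assoc, hW, Matrix.mul_one]

lemma mul_diagonal_mul_transpose_mul_one_sub [Fintype n] [DecidableEq n] [Fintype κ]
    [DecidableEq κ] (hW : Wᵀ * W = 1) (d : κ → ℝ) :
    W * diagonal d * Wᵀ * (1 - W * Wᵀ) = 0 := by
  rw [Matrix.mul_sub, Matrix.mul_one, ← Matrix.mul_assoc, mul_diagonal_mul_transpose_mul_self hW,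
    sub_self]

variable [Fintype n] [DecidableEq n] [Fintype κ] [DecidableEq κ] [Fintype ν] [DecidableEq ν]
  {d : κ → ℝ} {f : ν → ℝ}

theorem abs_le_l2_opNorm_sub_of_forall_abs_le (hW : Wᵀ * W = 1) (hV : Vᵀ * V = 1)
    (hWV : Wᵀ * V = 0) {j : ν} (hj : ∀ k, |f j| ≤ |d k|) (U : Matrix n κ ℝ) (D : κ → ℝ) :
    |f j| ≤ ‖W * diagonal d * Wᵀ + V * diagonal f * Vᵀ - U * diagonal D * Uᵀ‖ := by
  have := le_l2_opNorm_sub_mul_of_card_lt (transpose_fromCols_mul_self hW hV hWV)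
    (d := Sum.elim d f) (Function.Embedding.inl.optionElim (Sum.inr j) (by simp)).injective
    (b := |f j|) (by rintro (_ | k) <;> simp [hj]) (U * diagonal D) Uᵀ (by simp)
  rwa [fromCols_mul_diagonal_mul_transpose] at this

theorem sub_l2_opNorm_sub_le_abs_of_forall_abs_le (hW : Wᵀ * W = 1) (hV : Vᵀ * V = 1)
    (hWV : Wᵀ * V = 0) {k : κ} (hk : ∀ j, |f j| ≤ |d k|) {U : Matrix n κ ℝ} (hU : Uᵀ * U = 1)
    {D : κ → ℝ} {γ : ℝ} (hD : ∀ i, γ ≤ |D i|)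
    (hcard : Fintype.card n ≤ Fintype.card κ + Fintype.card ν) :
    γ - ‖W * diagonal d * Wᵀ + V * diagonal f * Vᵀ - U * diagonal D * Uᵀ‖ ≤ |d k| := by
  have := le_add_l2_opNorm_sub_of_card_lt (transpose_fromCols_mul_self hW hV hWV)
    (d := Sum.elim d f) (Function.Embedding.inr.optionElim (Sum.inl k) (by simp)).injective
    (abs_nonneg (d k)) (by rintro (_ | j) <;> simp [hk]) hU hD (by simp; omega)
  rw [fromCols_mul_diagonal_mul_transpose] at this
  linarith

end SpectralDecomposition

section SinTheta

variable {n κ : Type*} [Fintype n] [DecidableEq n] [Fintype κ] [DecidableEq κ]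
  {Q A Ah : Matrix n n ℝ}

theorem mul_l2_opNorm_transpose_mul_le {W : Matrix n κ ℝ} (hW : Wᵀ * W = 1) (hQ : ‖Q‖ ≤ 1)
    {d : κ → ℝ} (hAh : Wᵀ * Ah = diagonal d * Wᵀ) (hA : A * Q = 0) {b : ℝ}
    (hd : ∀ k, b ≤ |d k|) : b * ‖Wᵀ * Q‖ ≤ ‖Ah - A‖ :=
  calc b * ‖Wᵀ * Q‖ ≤ ‖diagonal d * (Wᵀ * Q)‖ := mul_l2_opNorm_le_diagonal_mul hd _
    _ = ‖Wᵀ * (Ah - A) * Q‖ := by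
      rw [Matrix.mul_sub, Matrix.sub_mul, hAh, Matrix.mul_assoc Wᵀ A, hA, Matrix.mul_zero,
        sub_zero, Matrix.mul_assoc]
    _ ≤ ‖Wᵀ‖ * ‖Ah - A‖ * ‖Q‖ := by grw [l2_opNorm_mul, l2_opNorm_mul]
    _ ≤ ‖Ah - A‖ := by
      grw [l2_opNorm_transpose_le_one_of_transpose_mul_self_eq_one hW, hQ]
      simp

theorem sub_mul_l2_opNorm_mul_le {U : Matrix n κ ℝ} {G : Matrix n n ℝ} (hU : Uᵀ * U = 1)
    (hQ : ‖Q‖ ≤ 1) {D : κ → ℝ} (hA : A * U = U * diagonal D) (hAh : Q * Ah = G * Q) {a : ℝ}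
    (hG : ‖G‖ ≤ a) {γ : ℝ} (hD : ∀ k, γ ≤ |D k|) : (γ - a) * ‖Q * U‖ ≤ ‖Ah - A‖ := by
  have hkey : Q * U * diagonal D = G * (Q * U) - Q * (Ah - A) * U := by
    rw [Matrix.mul_sub, Matrix.sub_mul, hAh, Matrix.mul_assoc Q A, hA, Matrix.mul_assoc G Q U,
      sub_sub_cancel, Matrix.mul_assoc]
  have h : γ * ‖Q * U‖ ≤ a * ‖Q * U‖ + ‖Ah - A‖ :=
    calc γ * ‖Q * U‖ ≤ ‖Q * U * diagonal D‖ := mul_l2_opNorm_le_mul_diagonal hD _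
      _ ≤ ‖G * (Q * U)‖ + ‖Q * (Ah - A) * U‖ := hkey ▸ norm_sub_le _ _
      _ ≤ ‖G‖ * ‖Q * U‖ + ‖Q‖ * ‖Ah - A‖ * ‖U‖ := by
        gcongr
        · exact l2_opNorm_mul _ _
        · exact (l2_opNorm_mul _ _).trans (by gcongr; exact l2_opNorm_mul _ _)
      _ ≤ a * ‖Q * U‖ + ‖Ah - A‖ := by
        grw [hG, hQ, l2_opNorm_le_one_of_transpose_mul_self_eq_one hU]
        simp
  linarith

theorem l2_opNorm_mul_transpose_sub_mul_transpose_le {κ' : Type*} [Fintype κ'] [DecidableEq κ']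
    {W : Matrix n κ ℝ} {U : Matrix n κ' ℝ} (hW : Wᵀ * W = 1) (hU : Uᵀ * U = 1) {r : ℝ}
    (hWU : ‖Wᵀ * (1 - U * Uᵀ)‖ ≤ r) (hUW : ‖(1 - W * Wᵀ) * U‖ ≤ r) :
    ‖W * Wᵀ - U * Uᵀ‖ ≤ r := by
  set Φ := toEuclideanCLM (n := n) (𝕜 := ℝ)
  rw [cstar_norm_def, map_sub]
  refine ContinuousLinearMap.norm_sub_le_of_isStarProjection
    ((isStarProjection_mul_transpose hW).map Φ) ((isStarProjection_mul_transpose hU).map Φ) ?_ ?_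
  · rw [← map_one Φ, ← map_sub, ← map_mul, ← cstar_norm_def, Matrix.mul_assoc,
      l2_opNorm_mul_of_transpose_mul_self_eq_one hW]
    exact hWU
  · rw [← map_one Φ, ← map_sub, ← map_mul, ← cstar_norm_def, ← Matrix.mul_assoc]
    grw [l2_opNorm_mul, l2_opNorm_transpose_le_one_of_transpose_mul_self_eq_one hU, hUW]
    simp

end SinTheta

end Matrix

theorem davis_kahan_projection_bound_general (n K : ℕ)
    (A Ah : Matrix (Fin n) (Fin n) ℝ)
    (γK : ℝ) (hγK : 0 < γK)
    (U : Matrix (Fin n) (Fin K) ℝ) (D : Fin K → ℝ)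
    (hU : Uᵀ * U = 1) (hAU : A = U * Matrix.diagonal D * Uᵀ)
    (hD : ∀ k, γK ≤ |D k|)
    (Uh : Matrix (Fin n) (Fin K) ℝ) (Dh : Fin K → ℝ)
    (V : Matrix (Fin n) (Fin (n - K)) ℝ) (E : Fin (n - K) → ℝ)
    (hUh : Uhᵀ * Uh = 1) (hV : Vᵀ * V = 1) (hUhV : Uhᵀ * V = 0)
    (hAhDecomp : Ah = Uh * Matrix.diagonal Dh * Uhᵀ + V * Matrix.diagonal E * Vᵀ)
    (hTop : ∀ j k, |E j| ≤ |Dh k|)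
    (hclose : ‖Ah - A‖ ≤ γK / 2) :
    ‖Uh * Uhᵀ - U * Uᵀ‖ ≤ 2 * ‖Ah - A‖ / γK := by
  have hE : ∀ j, |E j| ≤ ‖Ah - A‖ := fun j => by
    rw [hAhDecomp, hAU]
    exact abs_le_l2_opNorm_sub_of_forall_abs_le hUh hV hUhV (hTop j) U D
  have hDh : ∀ k, γK - ‖Ah - A‖ ≤ |Dh k| := fun k => by
    rw [hAhDecomp, hAU]
    exact sub_l2_opNorm_sub_le_abs_of_forall_abs_le hUh hV hUhV (hTop · k) hU hD (by simp; omega)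
  set ε := ‖Ah - A‖
  have hY : (γK - ε) * ‖Uhᵀ * (1 - U * Uᵀ)‖ ≤ ε :=
    mul_l2_opNorm_transpose_mul_le hUh (l2_opNorm_one_sub_mul_transpose_le_one hU)
      (hAhDecomp ▸ transpose_mul_add_mul_diagonal_mul_transpose hUh hUhV Dh E)
      (hAU ▸ mul_diagonal_mul_transpose_mul_one_sub hU D) hDh
  have hZ : (γK - ε) * ‖(1 - Uh * Uhᵀ) * U‖ ≤ ε :=
    sub_mul_l2_opNorm_mul_le hU (l2_opNorm_one_sub_mul_transpose_le_one hUh)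
      (hAU ▸ mul_diagonal_mul_transpose_mul_self hU D)
      (hAhDecomp ▸ one_sub_mul_transpose_mul_add_mul_diagonal_mul_transpose hUh hUhV Dh E)
      (l2_opNorm_mul_diagonal_mul_transpose_le hV (norm_nonneg _) hE) hD
  have hsin : ∀ x, 0 ≤ x → (γK - ε) * x ≤ ε → x ≤ 2 * ε / γK := fun x hx h => by
    rw [le_div_iff₀ hγK]
    nlinarith
  exact l2_opNorm_mul_transpose_sub_mul_transpose_le hUh hU (hsin _ (norm_nonneg _) hY)
    (hsin _ (norm_nonneg _) hZ)

/-- Davis–Kahan-type bound: let `A = U diag(D) Uᵀ` be symmetric of rank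
`K` with all its nonzero eigenvalues of magnitude at least `γK > 0` (`U` has orthonormal
columns), and let `Â` be symmetric with eigendecomposition
`Â = Û diag(D̂) Ûᵀ + V diag(E) Vᵀ`, where `Û` carries the `K` largest-magnitude
eigenvalues (`|E j| ≤ |D̂ k|` for all `j, k`), `Ûᵀ Û = I`, `Vᵀ V = I`, `Ûᵀ V = 0`.
If `‖Â − A‖ ≤ γK/2` then `‖Û Ûᵀ − U Uᵀ‖ ≤ 2 ‖Â − A‖ / γK`. -/
theorem davis_kahan_projection_bound (n K : ℕ)
    (A Ah : Matrix (Fin n) (Fin n) ℝ) (hA : A.IsSymm) (hAh : Ah.IsSymm)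
    (γK : ℝ) (hγK : 0 < γK)
    (U : Matrix (Fin n) (Fin K) ℝ) (D : Fin K → ℝ)
    (hU : Uᵀ * U = 1) (hAU : A = U * Matrix.diagonal D * Uᵀ)
    (hD : ∀ k, γK ≤ |D k|)
    (Uh : Matrix (Fin n) (Fin K) ℝ) (Dh : Fin K → ℝ)
    (V : Matrix (Fin n) (Fin (n - K)) ℝ) (E : Fin (n - K) → ℝ)
    (hUh : Uhᵀ * Uh = 1) (hV : Vᵀ * V = 1) (hUhV : Uhᵀ * V = 0)
    (hAhDecomp : Ah = Uh * Matrix.diagonal Dh * Uhᵀ + V * Matrix.diagonal E * Vᵀ)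
    (hTop : ∀ j k, |E j| ≤ |Dh k|)
    (hclose : ‖Ah - A‖ ≤ γK / 2) :
    ‖Uh * Uhᵀ - U * Uᵀ‖ ≤ 2 * ‖Ah - A‖ / γK :=
  davis_kahan_projection_bound_general n K A Ah γK hγK U D hU hAU hD Uh Dh V E hUh hV hUhV hAhDecomp
    hTop hclose
end
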